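/- arXiv:1909.13752 — 3 statements merged into one kernel-verified Lean document; each statement's English description precedes it below -/
import Mathlib

section
/- Let u be a linear functional on 𝒫 which is regular and satisfies D_{q,ω}(φu) = ψu, where φ(x) = ax² + bx + c has degree at most 2, ψ(x) = dx + e has degree at most 1, and at least one of φ, ψ is not the zero polynomial. Then (φ, ψ) is a (q,ω)-admissible pair, i.e., d_n := dq^n + a[n]_q ≠ 0 for every integer n ≥ 0. -/
/-!
Transposing the Pearson equation, `u` annihilates the range of `W f = φ · D* f + q ψ · f`.
Since `D*` lowers degrees by one, with leading coefficient `[m]_{1/q}` on `x^m`, `W` raises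
degrees by at most one and the coefficient of `x^(m+1)` in `W x^m` is `q^(1-m) d_m`. So if
`d_n = 0`, `W` maps the polynomials of degree `≤ n` into themselves. But `W` is injective: if
`W g = 0` with `g ≠ 0`, the product rule `D*(w g) = D* w · g(x/q - ω/q) + w · D* g` gives
`⟨u, φ · g(x/q - ω/q) · D* w⟩ = 0` for all `w`; as `D*` is onto, regularity forces `φ = 0`,
and then `ψ = 0`. An injective endomorphism of a finite-dimensional space is onto, so `1 = W h`
for some `h`, and `⟨u, 1⟩ = 0` contradicts regularity.
-/

open Polynomial

noncomputable section

namespace HahnOPSPaper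

/-- The algebraic dual of the space of complex polynomials. -/
abbrev PDual : Type := Module.Dual ℂ (Polynomial ℂ)

/-- Left multiplication of a functional by a polynomial: `⟨φu, f⟩ = ⟨u, φf⟩`. -/
def pMul (φ : Polynomial ℂ) (u : PDual) : PDual := u ∘ₗ LinearMap.mulLeft ℂ φ

/-- Distributional derivative: `⟨Du, f⟩ = -⟨u, f'⟩`. -/
def dDeriv (u : PDual) : PDual :=
  -(u ∘ₗ (Polynomial.derivative : Polynomial ℂ →ₗ[ℂ] Polynomial ℂ))

/-- The q-bracket `[n]_q = 1 + q + ⋯ + q^(n-1)`. -/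
def qBracket (q : ℂ) (n : ℕ) : ℂ := ∑ i ∈ Finset.range n, q ^ i

/-- q-factorial `[n]_q!`. -/
def qFact (q : ℂ) (n : ℕ) : ℂ := ∏ i ∈ Finset.range n, qBracket q (i + 1)

/-- `D` is Hahn's operator `D_{q,ω}`, i.e. the (unique, for `(q,ω) ≠ (1,0)`) linear operator
with `((q-1)x + ω)·(Df)(x) = f(qx+ω) - f(x)`. -/
def IsHahn (q ω : ℂ) (D : Polynomial ℂ →ₗ[ℂ] Polynomial ℂ) : Prop :=
  ∀ f : Polynomial ℂ, (C (q - 1) * X + C ω) * D f = f.comp (C q * X + C ω) - f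

/-- The operator `(L_{q,ω} f)(x) = f(qx + ω)`. -/
def Lop (q ω : ℂ) : Polynomial ℂ →ₗ[ℂ] Polynomial ℂ :=
  (aeval (C q * X + C ω)).toLinearMap

/-- The distributional Hahn operator `D_{q,ω}` on the dual, built from the ordinary operator
`D*_{q,ω} = D_{1/q,-ω/q}`: `⟨D_{q,ω}u, f⟩ = -q⁻¹·⟨u, D*_{q,ω}f⟩`. -/
def hahnDual (q : ℂ) (Dstar : Polynomial ℂ →ₗ[ℂ] Polynomial ℂ) (u : PDual) : PDual :=
  (-q⁻¹) • (u ∘ₗ Dstar)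

/-- The distributional operator `L_{q,ω}`: `⟨L_{q,ω}u, f⟩ = q⁻¹·⟨u, L_{1/q,-ω/q}f⟩`. -/
def LDual (q ω : ℂ) (u : PDual) : PDual := q⁻¹ • (u ∘ₗ Lop q⁻¹ (-ω / q))

/-- A functional is regular if it admits a monic orthogonal polynomial sequence. -/
def IsRegularFunc (u : PDual) : Prop :=
  ∃ P : ℕ → Polynomial ℂ, (∀ n, (P n).Monic ∧ (P n).natDegree = n) ∧
    (∀ m n, m ≠ n → u (P m * P n) = 0) ∧ (∀ n, u (P n ^ 2) ≠ 0)

/-- `P` is the monic OPS with respect to `u`. -/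
def IsMonicOPS (u : PDual) (P : ℕ → Polynomial ℂ) : Prop :=
  (∀ n, (P n).Monic ∧ (P n).natDegree = n) ∧
    (∀ m n, m ≠ n → u (P m * P n) = 0) ∧ (∀ n, u (P n ^ 2) ≠ 0)

/-- Continuous case: `d_n = d + a·n`. -/
def ddC (a d : ℂ) (n : ℕ) : ℂ := d + a * n

/-- Continuous case: `e_n = e + b·n`. -/
def eeC (b e : ℂ) (n : ℕ) : ℂ := e + b * n

/-- Continuous case: `β_n = n·e_{n-1}/d_{2n-2} - (n+1)·e_n/d_{2n}`. -/
def betaC (a b d e : ℂ) (n : ℕ) : ℂ :=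
  n * eeC b e (n - 1) / ddC a d (2 * n - 2) - (n + 1) * eeC b e n / ddC a d (2 * n)

/-- Continuous case: `γ_{n+1} = -((n+1)·d_{n-1}/(d_{2n-1}·d_{2n+1}))·φ(-e_n/d_{2n})`. -/
def gammaC (a b d e : ℂ) (φ : Polynomial ℂ) (n : ℕ) : ℂ :=
  -((n + 1) * ddC a d (n - 1) / (ddC a d (2 * n - 1) * ddC a d (2 * n + 1))) *
    φ.eval (-(eeC b e n) / ddC a d (2 * n))

/-- `d_n = d·q^n + a·[n]_q`. -/
def ddQ (q a d : ℂ) (n : ℕ) : ℂ := d * q ^ n + a * qBracket q n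

/-- `e_n = e·q^n + (ω·d_n + b)·[n]_q`. -/
def eeQ (q ω a b d e : ℂ) (n : ℕ) : ℂ :=
  e * q ^ n + (ω * ddQ q a d n + b) * qBracket q n

/-- `β_n = ω[n]_q + [n]_q·e_{n-1}/d_{2n-2} - [n+1]_q·e_n/d_{2n}`. -/
def betaQ (q ω a b d e : ℂ) (n : ℕ) : ℂ :=
  ω * qBracket q n + qBracket q n * eeQ q ω a b d e (n - 1) / ddQ q a d (2 * n - 2)
    - qBracket q (n + 1) * eeQ q ω a b d e n / ddQ q a d (2 * n)

/-- `γ_{n+1} = -(q^n·[n+1]_q·d_{n-1}/(d_{2n-1}·d_{2n+1}))·φ(-e_n/d_{2n})`. -/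
def gammaQ (q ω a b d e : ℂ) (φ : Polynomial ℂ) (n : ℕ) : ℂ :=
  -(q ^ n * qBracket q (n + 1) * ddQ q a d (n - 1) /
      (ddQ q a d (2 * n - 1) * ddQ q a d (2 * n + 1))) *
    φ.eval (-(eeQ q ω a b d e n) / ddQ q a d (2 * n))

/-- `Φ(x;n) = ∏_{j=1}^n φ(q^j x + ω[j]_q)`. -/
def PhiQ (q ω : ℂ) (φ : Polynomial ℂ) (n : ℕ) : Polynomial ℂ :=
  ∏ j ∈ Finset.range n, φ.comp (C (q ^ (j + 1)) * X + C (ω * qBracket q (j + 1)))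

/-- `k_n = q^{n(n-3)/2}·∏_{j=0}^{n-1} d_{n+j-1}⁻¹`. -/
def kQ (q a d : ℂ) (n : ℕ) : ℂ :=
  q ^ (((n : ℤ) * ((n : ℤ) - 3)) / 2) * ∏ j ∈ Finset.range n, (ddQ q a d (n + j - 1))⁻¹

lemma qBracket_ne_zero {p : ℂ} (hp : ∀ n : ℕ, 0 < n → p ^ n = 1 → p = 1) {n : ℕ} (hn : 0 < n) :
    qBracket p n ≠ 0 := by
  by_cases hp1 : p = 1
  · simpa [qBracket, hp1] using hn.ne'
  · rw [qBracket, geom_sum_eq hp1]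
    exact div_ne_zero (sub_ne_zero.2 fun h => hp1 (hp n hn h)) (sub_ne_zero.2 hp1)

lemma pow_mul_qBracket_inv {q : ℂ} (hq : q ≠ 0) (n : ℕ) :
    q ^ n * qBracket q⁻¹ n = q * qBracket q n := by
  rw [qBracket, qBracket, Finset.mul_sum, Finset.mul_sum,
    ← Finset.sum_range_reflect (fun i => q * q ^ i)]
  refine Finset.sum_congr rfl fun i hi => ?_
  rw [Finset.mem_range] at hi
  rw [← pow_succ', inv_pow, ← pow_sub₀ _ hq hi.le]
  congr 1
  omega

lemma degree_sub_C_mul_lt {R : Type*} [Ring R] {f g : R[X]} {k : ℕ} {c : R}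
    (hf : f.degree < ↑(k + 1)) (hg : g.degree < ↑(k + 1)) (hc : f.coeff k = c * g.coeff k) :
    (f - C c * g).degree < k := by
  rw [degree_lt_iff_coeff_zero] at hf hg ⊢
  intro m hm
  rcases hm.eq_or_lt with rfl | hm
  · rw [coeff_sub, coeff_C_mul, hc, sub_self]
  · rw [coeff_sub, coeff_C_mul, hf m hm, hg m hm, mul_zero, sub_zero]

section Regular

variable {u : PDual} {P : ℕ → ℂ[X]}

lemma IsMonicOPS.degree_sub_C_coeff_mul_lt (hP : IsMonicOPS u P) {n : ℕ} {g : ℂ[X]}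
    (hg : g.degree < ↑(n + 1)) : (g - C (g.coeff n) * P n).degree < n := by
  obtain ⟨hmonic, hdeg⟩ := hP.1 n
  have hcoeff : (P n).coeff n = 1 := by simpa [hdeg] using hmonic.coeff_natDegree
  refine degree_sub_C_mul_lt hg ?_ (by rw [hcoeff, mul_one])
  rw [degree_eq_natDegree hmonic.ne_zero, hdeg]
  exact_mod_cast n.lt_succ_self

lemma IsMonicOPS.apply_mul_eq_zero_of_degree_lt (hP : IsMonicOPS u P) {n : ℕ}
    {g : ℂ[X]} (hg : g.degree < n) : u (P n * g) = 0 := by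
  suffices ∀ k ≤ n, ∀ g : ℂ[X], g.degree < k → u (P n * g) = 0 from this n le_rfl g hg
  intro k
  induction k with
  | zero =>
    intro _ g hg
    have : g = 0 := by
      ext m
      exact (degree_lt_iff_coeff_zero g 0).1 hg m m.zero_le
    rw [this, mul_zero, map_zero]
  | succ k ih =>
    intro hk g hg
    have hsplit : P n * g = g.coeff k • (P n * P k) + P n * (g - C (g.coeff k) * P k) := by
      rw [smul_eq_C_mul]
      ring
    rw [hsplit, map_add, map_smul, hP.2.1 n k (by omega),
      ih (by omega) _ (hP.degree_sub_C_coeff_mul_lt hg), smul_zero, add_zero]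

lemma IsRegularFunc.apply_one_ne_zero (hu : IsRegularFunc u) : u 1 ≠ 0 := by
  obtain ⟨P, hmonic, -, hnorm⟩ := hu
  simpa [eq_one_of_monic_natDegree_zero (hmonic 0).1 (hmonic 0).2] using hnorm 0

lemma IsRegularFunc.eq_zero_of_forall_apply_mul_eq_zero (hu : IsRegularFunc u) {g : ℂ[X]}
    (hg : ∀ f, u (g * f) = 0) : g = 0 := by
  obtain ⟨P, hP⟩ : ∃ P, IsMonicOPS u P := hu
  by_contra hg0
  set n := g.natDegree
  have hsplit : g * P n = g.leadingCoeff • P n ^ 2 + P n * (g - C (g.coeff n) * P n) := by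
    rw [smul_eq_C_mul, coeff_natDegree]
    ring
  have hr : (g - C (g.coeff n) * P n).degree < n := hP.degree_sub_C_coeff_mul_lt
    (degree_le_natDegree.trans_lt (by exact_mod_cast n.lt_succ_self))
  have hgP := hg (P n)
  rw [hsplit, map_add, map_smul, hP.apply_mul_eq_zero_of_degree_lt hr, add_zero,
    smul_eq_mul] at hgP
  exact mul_ne_zero (leadingCoeff_ne_zero.2 hg0) (hP.2.2 n) hgP

end Regular

lemma natDegree_linear_pow_mul_X_pow_le {R : Type*} [Semiring R] (p θ : R) (i j : ℕ) :
    ((C p * X + C θ) ^ i * X ^ j).natDegree ≤ i + j :=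
  natDegree_mul_le_of_le ((natDegree_pow_le_of_le i natDegree_linear_le).trans (mul_one i).le)
    (natDegree_X_pow_le j)

lemma coeff_linear_pow_mul_X_pow {R : Type*} [Semiring R] (p θ : R) (i j : ℕ) :
    ((C p * X + C θ) ^ i * X ^ j).coeff (i + j) = p ^ i := by
  have hpow : ((C p * X + C θ) ^ i).coeff i = p ^ i := by
    simpa using coeff_pow_of_natDegree_le (m := i) (natDegree_linear_le (a := p) (b := θ))
  rw [coeff_mul_add_eq_of_natDegree_le
    ((natDegree_pow_le_of_le i natDegree_linear_le).trans (mul_one i).le) (natDegree_X_pow_le j),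
    hpow, coeff_X_pow_self, mul_one]

section Hahn

variable {p θ : ℂ} {D : ℂ[X] →ₗ[ℂ] ℂ[X]}

lemma C_sub_one_mul_X_add_C_ne_zero (hpθ : p ≠ 1 ∨ θ ≠ 0) : C (p - 1) * X + C θ ≠ 0 := by
  intro h
  have h1 : p - 1 = 0 := by simpa using congr_arg (coeff · 1) h
  have h0 : θ = 0 := by simpa using congr_arg (coeff · 0) h
  exact hpθ.elim (· (sub_eq_zero.1 h1)) (· h0)

lemma IsHahn.apply_mul (hD : IsHahn p θ D) (hpθ : p ≠ 1 ∨ θ ≠ 0) (f g : ℂ[X]) :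
    D (f * g) = D f * g.comp (C p * X + C θ) + f * D g := by
  refine mul_left_cancel₀ (C_sub_one_mul_X_add_C_ne_zero hpθ) ?_
  have hfg := hD (f * g)
  rw [mul_comp] at hfg
  linear_combination hfg - g.comp (C p * X + C θ) * hD f - f * hD g

lemma IsHahn.apply_X_pow (hD : IsHahn p θ D) (hpθ : p ≠ 1 ∨ θ ≠ 0) (n : ℕ) :
    D (X ^ n) = ∑ i ∈ Finset.range n, (C p * X + C θ) ^ i * X ^ (n - 1 - i) := by
  refine mul_left_cancel₀ (C_sub_one_mul_X_add_C_ne_zero hpθ) ?_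
  have hfactor : C (p - 1) * X + C θ = (C p * X + C θ) - X := by
    rw [C_sub, C_1]
    ring
  rw [hD, X_pow_comp, hfactor, mul_comm _ (Finset.sum _ _), geom_sum₂_mul]

lemma IsHahn.apply_one (hD : IsHahn p θ D) (hpθ : p ≠ 1 ∨ θ ≠ 0) : D 1 = 0 := by
  simpa using hD.apply_X_pow hpθ 0

lemma IsHahn.natDegree_apply_X_pow_succ_le (hD : IsHahn p θ D) (hpθ : p ≠ 1 ∨ θ ≠ 0) (n : ℕ) :
    (D (X ^ (n + 1))).natDegree ≤ n := by
  rw [hD.apply_X_pow hpθ]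
  refine natDegree_sum_le_of_forall_le _ _ fun i hi => ?_
  have hi : i ≤ n := Nat.lt_succ_iff.1 (Finset.mem_range.1 hi)
  simpa [Nat.add_sub_cancel' hi] using natDegree_linear_pow_mul_X_pow_le p θ i (n - i)

lemma IsHahn.coeff_apply_X_pow_succ (hD : IsHahn p θ D) (hpθ : p ≠ 1 ∨ θ ≠ 0) (n : ℕ) :
    (D (X ^ (n + 1))).coeff n = qBracket p (n + 1) := by
  rw [hD.apply_X_pow hpθ, finsetSum_coeff, qBracket]
  refine Finset.sum_congr rfl fun i hi => ?_
  have hi : i ≤ n := Nat.lt_succ_iff.1 (Finset.mem_range.1 hi)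
  simpa [Nat.add_sub_cancel' hi] using coeff_linear_pow_mul_X_pow p θ i (n - i)

lemma IsHahn.surjective (hD : IsHahn p θ D) (hpθ : p ≠ 1 ∨ θ ≠ 0)
    (hp : ∀ n : ℕ, 0 < n → p ^ n = 1 → p = 1) : Function.Surjective D := by
  suffices ∀ N : ℕ, ∀ v : ℂ[X], v.degree < N → ∃ w, D w = v from
    fun v => this (v.natDegree + 1) v
      (degree_le_natDegree.trans_lt (by exact_mod_cast v.natDegree.lt_succ_self))
  intro N
  induction N with
  | zero =>
    intro v hv
    refine ⟨0, ?_⟩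
    ext m
    rw [map_zero, coeff_zero, (degree_lt_iff_coeff_zero v 0).1 hv m m.zero_le]
  | succ N ih =>
    intro v hv
    set c := v.coeff N / qBracket p (N + 1)
    have hDX : (D (X ^ (N + 1))).degree < ↑(N + 1) := degree_le_natDegree.trans_lt
      (by exact_mod_cast (hD.natDegree_apply_X_pow_succ_le hpθ N).trans_lt N.lt_succ_self)
    obtain ⟨w, hw⟩ := ih (v - C c * D (X ^ (N + 1))) (degree_sub_C_mul_lt hv hDX
      (by rw [hD.coeff_apply_X_pow_succ hpθ, div_mul_cancel₀ _ (qBracket_ne_zero hp N.succ_pos)]))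
    refine ⟨w + C c * X ^ (N + 1), ?_⟩
    rw [map_add, C_mul', map_smul, hw, ← C_mul', sub_add_cancel]

end Hahn

def pearsonOp (D : ℂ[X] →ₗ[ℂ] ℂ[X]) (φ χ : ℂ[X]) : ℂ[X] →ₗ[ℂ] ℂ[X] :=
  LinearMap.mulLeft ℂ φ ∘ₗ D + LinearMap.mulLeft ℂ χ

section Pearson

variable {p θ : ℂ} {D : ℂ[X] →ₗ[ℂ] ℂ[X]} {φ χ : ℂ[X]}

@[simp]
lemma pearsonOp_apply (f : ℂ[X]) : pearsonOp D φ χ f = φ * D f + χ * f := rfl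

lemma apply_pearsonOp_eq_zero_of_hahnDual_eq {q : ℂ} (hq : q ≠ 0) {ψ : ℂ[X]} {u : PDual}
    (heq : hahnDual q D (pMul φ u) = pMul ψ u) (f : ℂ[X]) :
    u (pearsonOp D φ (C q * ψ) f) = 0 := by
  have hf := LinearMap.congr_fun heq f
  simp only [hahnDual, pMul, LinearMap.smul_apply, LinearMap.comp_apply,
    LinearMap.mulLeft_apply, smul_eq_mul] at hf
  rw [pearsonOp_apply, map_add, mul_assoc, ← smul_eq_C_mul, map_smul, ← hf, smul_eq_mul]
  field_simp
  ring

lemma IsHahn.pearsonOp_mul (hD : IsHahn p θ D) (hpθ : p ≠ 1 ∨ θ ≠ 0) (w f : ℂ[X]) :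
    pearsonOp D φ χ (w * f) = φ * f.comp (C p * X + C θ) * D w + w * pearsonOp D φ χ f := by
  rw [pearsonOp_apply, pearsonOp_apply, hD.apply_mul hpθ]
  ring

lemma IsHahn.natDegree_pearsonOp_X_pow_le (hD : IsHahn p θ D) (hpθ : p ≠ 1 ∨ θ ≠ 0)
    (hφ : φ.natDegree ≤ 2) (hχ : χ.natDegree ≤ 1) (n : ℕ) :
    (pearsonOp D φ χ (X ^ n)).natDegree ≤ n + 1 := by
  rw [pearsonOp_apply]
  refine natDegree_add_le_of_degree_le ?_
    ((natDegree_mul_le_of_le hχ (natDegree_X_pow_le n)).trans (by omega))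
  rcases n with _ | k
  · simp [hD.apply_one hpθ]
  · exact (natDegree_mul_le_of_le hφ (hD.natDegree_apply_X_pow_succ_le hpθ k)).trans (by omega)

lemma IsHahn.coeff_pearsonOp_X_pow (hD : IsHahn p θ D) (hpθ : p ≠ 1 ∨ θ ≠ 0)
    (hφ : φ.natDegree ≤ 2) (hχ : χ.natDegree ≤ 1) (n : ℕ) :
    (pearsonOp D φ χ (X ^ n)).coeff (n + 1) = φ.coeff 2 * qBracket p n + χ.coeff 1 := by
  have hχX : (χ * X ^ n).coeff (1 + n) = χ.coeff 1 := by
    rw [coeff_mul_add_eq_of_natDegree_le hχ (natDegree_X_pow_le n), coeff_X_pow_self, mul_one]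
  rw [pearsonOp_apply, coeff_add, add_comm n 1, hχX]
  rcases n with _ | k
  · simp [hD.apply_one hpθ, qBracket]
  · rw [show 1 + (k + 1) = 2 + k by omega, coeff_mul_add_eq_of_natDegree_le hφ
      (hD.natDegree_apply_X_pow_succ_le hpθ k), hD.coeff_apply_X_pow_succ hpθ]

lemma IsHahn.mapsTo_pearsonOp_degreeLT (hD : IsHahn p θ D) (hpθ : p ≠ 1 ∨ θ ≠ 0)
    (hφ : φ.natDegree ≤ 2) (hχ : χ.natDegree ≤ 1) {n : ℕ}
    (htop : φ.coeff 2 * qBracket p n + χ.coeff 1 = 0) :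
    Set.MapsTo (pearsonOp D φ χ) (degreeLT ℂ (n + 1)) (degreeLT ℂ (n + 1)) := by
  classical
  suffices degreeLT ℂ (n + 1) ≤ (degreeLT ℂ (n + 1)).comap (pearsonOp D φ χ) from
    fun f hf => this hf
  conv_lhs => rw [degreeLT_eq_span_X_pow]
  rw [Submodule.span_le, Finset.coe_image]
  rintro _ ⟨m, hm, rfl⟩
  have hm : m ≤ n := Nat.lt_succ_iff.1 (Finset.mem_range.1 hm)
  have hdeg : (pearsonOp D φ χ (X ^ m)).natDegree ≤ n := by
    rcases hm.lt_or_eq with hm | rfl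
    · exact (hD.natDegree_pearsonOp_X_pow_le hpθ hφ hχ m).trans hm
    · simpa using natDegree_le_pred (hD.natDegree_pearsonOp_X_pow_le hpθ hφ hχ m)
        ((hD.coeff_pearsonOp_X_pow hpθ hφ hχ m).trans htop)
  exact mem_degreeLT.2 (degree_le_natDegree.trans_lt (by exact_mod_cast Nat.lt_succ_of_le hdeg))

lemma IsRegularFunc.pearsonOp_injective {u : PDual} (hu : IsRegularFunc u) (hD : IsHahn p θ D)
    (hpθ : p ≠ 1 ∨ θ ≠ 0) (hp : p ≠ 0) (hsurj : Function.Surjective D) (hne : φ ≠ 0 ∨ χ ≠ 0)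
    (hW : ∀ f, u (pearsonOp D φ χ f) = 0) : Function.Injective (pearsonOp D φ χ) := by
  refine (injective_iff_map_eq_zero _).2 fun x hx => ?_
  by_contra hx0
  have hcomp : x.comp (C p * X + C θ) ≠ 0 := by
    rw [← leadingCoeff_ne_zero, leadingCoeff_comp (by rw [natDegree_linear hp]; exact one_ne_zero),
      leadingCoeff_linear hp]
    exact mul_ne_zero (leadingCoeff_ne_zero.2 hx0) (pow_ne_zero _ hp)
  have hφ : φ = 0 := by
    refine (mul_eq_zero.1 (hu.eq_zero_of_forall_apply_mul_eq_zero fun g => ?_)).resolve_right hcomp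
    obtain ⟨w, rfl⟩ := hsurj g
    simpa [hD.pearsonOp_mul hpθ, hx] using hW (w * x)
  have hχ : χ = 0 := by
    simpa [hφ, hx0] using hx
  exact hne.elim (· hφ) (· hχ)

lemma IsRegularFunc.not_mapsTo_degreeLT {u : PDual} (hu : IsRegularFunc u)
    {L : ℂ[X] →ₗ[ℂ] ℂ[X]} (hL : ∀ f, u (L f) = 0) (hinj : Function.Injective L) (n : ℕ) :
    ¬ Set.MapsTo L (degreeLT ℂ (n + 1)) (degreeLT ℂ (n + 1)) := by
  intro hmaps
  have : FiniteDimensional ℂ (degreeLT ℂ (n + 1)) :=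
    Module.Finite.equiv (degreeLTEquiv ℂ (n + 1)).symm
  have hone : (1 : ℂ[X]) ∈ degreeLT ℂ (n + 1) :=
    mem_degreeLT.2 (by rw [degree_one]; exact_mod_cast n.succ_pos)
  obtain ⟨f, -, hf⟩ := (LinearMap.injOn_iff_surjOn hmaps).1 hinj.injOn hone
  exact hu.apply_one_ne_zero (hf ▸ hL f)

end Pearson

theorem stmt_11 (q ω : ℂ) (hq0 : q ≠ 0) (hqω : q ≠ 1 ∨ ω ≠ 0)
    (hqr : ∀ n : ℕ, 0 < n → q ^ n = 1 → q = 1)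
    (a b c d e : ℂ) (φ ψ : Polynomial ℂ)
    (hφ : φ = C a * X ^ 2 + C b * X + C c) (hψ : ψ = C d * X + C e)
    (hne : φ ≠ 0 ∨ ψ ≠ 0)
    (Dstar : Polynomial ℂ →ₗ[ℂ] Polynomial ℂ) (hDstar : IsHahn q⁻¹ (-ω / q) Dstar)
    (u : PDual) (hreg : IsRegularFunc u)
    (heq : hahnDual q Dstar (pMul φ u) = pMul ψ u) :
    ∀ n : ℕ, ddQ q a d n ≠ 0 := by
  intro n hdn
  have hpθ : q⁻¹ ≠ 1 ∨ -ω / q ≠ 0 :=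
    hqω.imp inv_ne_one.2 fun hω => div_ne_zero (neg_ne_zero.2 hω) hq0
  have hp : ∀ n : ℕ, 0 < n → q⁻¹ ^ n = 1 → q⁻¹ = 1 := fun n hn h => by
    rw [inv_pow, inv_eq_one] at h
    rw [hqr n hn h, inv_one]
  have hW := apply_pearsonOp_eq_zero_of_hahnDual_eq hq0 heq
  have hinj := hreg.pearsonOp_injective hDstar hpθ (inv_ne_zero hq0) (hDstar.surjective hpθ hp)
    (hne.imp_right (mul_ne_zero (C_ne_zero.2 hq0))) hW
  have hφ2 : φ.natDegree ≤ 2 := hφ ▸ natDegree_quadratic_le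
  have hχ1 : (C q * ψ).natDegree ≤ 1 :=
    natDegree_mul_le_of_le (natDegree_C q).le (hψ ▸ natDegree_linear_le)
  refine hreg.not_mapsTo_degreeLT hW hinj n (hDstar.mapsTo_pearsonOp_degreeLT hpθ hφ2 hχ1 ?_)
  -- `q ^ n * (a [n]_{1/q} + q d) = q d_n`
  have hcoeff : φ.coeff 2 * qBracket q⁻¹ n + (C q * ψ).coeff 1 = a * qBracket q⁻¹ n + q * d := by
    simp [hφ, hψ]
  rw [hcoeff]
  refine (mul_eq_zero.1 ?_).resolve_left (pow_ne_zero n hq0)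
  rw [ddQ] at hdn
  linear_combination a * pow_mul_qBracket_inv hq0 n + q * hdn

end HahnOPSPaper
end
end

section
/- Let φ(x) = ax² + bx + c and ψ(x) = dx + e be polynomials with complex coefficients, and define ψ^[0] := ψ and ψ^[k] := D_{q,ω}φ + q·L_{q,ω}ψ^[k−1] for k ≥ 1. Then for every k ≥ 0, ψ^[k](x) = d_{2k}·x + e_k, where d_{2k} := dq^{2k} + a[2k]_q and e_k := eq^k + (ωd_k + b)[k]_q with d_k := dq^k + a[k]_q. -/
open Polynomial

noncomputable section

namespace HahnOPSPaper

lemma qB_succ (q : ℂ) (n : ℕ) : qBracket q (n+1) = q * qBracket q n + 1 :=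
  geom_sum_succ

lemma qB_qpow (q : ℂ) (n : ℕ) : q ^ n = 1 + q * qBracket q n - qBracket q n := by
  have h1 : qBracket q (n+1) = q ^ n + qBracket q n := geom_sum_succ'
  have h2 := qB_succ q n
  rw [h1] at h2; linear_combination h2

lemma qB_add (q : ℂ) (m n : ℕ) :
    qBracket q (m + n) = qBracket q m + q ^ m * qBracket q n := by
  induction n with
  | zero => simp [qBracket]
  | succ n ih =>
    have hs : qBracket q (m + n + 1) = q ^ (m + n) + qBracket q (m + n) :=
      geom_sum_succ'
    have hs2 : qBracket q (n + 1) = q ^ n + qBracket q n := geom_sum_succ'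
    rw [show m + (n+1) = (m+n)+1 from rfl, hs, hs2, ih, pow_add]
    ring

lemma qB_double (q : ℂ) (k : ℕ) :
    qBracket q (2*k) = qBracket q k + q ^ k * qBracket q k := by
  rw [two_mul, qB_add]

theorem stmt_13 (q ω : ℂ) (hq0 : q ≠ 0) (hqω : q ≠ 1 ∨ ω ≠ 0)
    (hqr : ∀ n : ℕ, 0 < n → q ^ n = 1 → q = 1)
    (a b c d e : ℂ) (φ ψ : Polynomial ℂ)
    (hφ : φ = C a * X ^ 2 + C b * X + C c) (hψ : ψ = C d * X + C e)
    (Dqw : Polynomial ℂ →ₗ[ℂ] Polynomial ℂ) (hDqw : IsHahn q ω Dqw)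
    (psik : ℕ → Polynomial ℂ) (hps0 : psik 0 = ψ)
    (hpsk : ∀ k : ℕ, psik (k + 1) = Dqw φ + C q * Lop q ω (psik k)) :
    ∀ k : ℕ, psik k = C (ddQ q a d (2 * k)) * X + C (eeQ q ω a b d e k) := by
  have hm : (C (q - 1) * X + C ω : Polynomial ℂ) ≠ 0 := by
    intro h
    rcases hqω with hq | hω
    · have := congrArg (fun p => Polynomial.coeff p 1) h
      simp [coeff_add, coeff_C] at this
      exact hq (by linear_combination this)
    · have := congrArg (fun p => Polynomial.coeff p 0) h
      simp [coeff_add, coeff_C] at this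
      exact hω this
  have hDφ : Dqw φ = C (a * (1 + q)) * X + C (a * ω + b) := by
    apply mul_left_cancel₀ hm
    rw [hDqw φ, hφ]
    simp only [add_comp, mul_comp, C_comp, X_comp, pow_comp, C_mul, C_add, C_sub, C_1]
    ring
  intro k
  induction k with
  | zero =>
    rw [hps0, hψ]
    simp [ddQ, eeQ, qBracket]
  | succ k ih =>
    rw [hpsk, ih]
    have hL : Lop q ω (C (ddQ q a d (2*k)) * X + C (eeQ q ω a b d e k))
        = C (ddQ q a d (2*k)) * (C q * X + C ω) + C (eeQ q ω a b d e k) := by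
      simp [Lop]
    rw [hL, hDφ]
    have h1 : ddQ q a d (2 * (k+1))
        = a * (1 + q) + q * (ddQ q a d (2*k) * q) := by
      have h2 : 2 * (k+1) = (2*k + 1) + 1 := by ring
      rw [ddQ, ddQ, h2, qB_succ, qB_succ, pow_succ, pow_succ]
      ring
    have h2 : eeQ q ω a b d e (k+1)
        = (a * ω + b) + q * (ddQ q a d (2*k) * ω + eeQ q ω a b d e k) := by
      rw [eeQ, eeQ, ddQ, ddQ, ddQ, qB_succ, qB_double, pow_succ, two_mul, pow_add,
        qB_qpow]
      ring
    rw [h1, h2]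
    simp only [C_mul, C_add]
    ring


end HahnOPSPaper
end
end

section
/- Let u be a linear functional on 𝒫 satisfying D_{q,ω}(φu) = ψu, where φ has degree at most 2 and ψ has degree at most 1 (no regularity of u is assumed). Define u^[0] := u, u^[k] := L_{q,ω}(φ·u^[k−1]) and ψ^[0] := ψ, ψ^[k] := D_{q,ω}φ + q·L_{q,ω}ψ^[k−1] for k ≥ 1. Then for every k ≥ 0 the functional equation D_{q,ω}(φ·u^[k]) = ψ^[k]·u^[k] holds in 𝒫*. -/
open Polynomial

noncomputable section

namespace HahnOPSPaper

/-!
Dividing out the nonzero factor `σ = (q-1)x + ω`, Hahn's operator `D = D_{q,ω}` obeys three rules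
that are identities about composition with `x ↦ qx + ω`: the q-Leibniz rule
`D(fg) = Df·g + Lf·Dg`, the commutation `D ∘ L = q·L ∘ D`, and `D* = L* ∘ D`. Testing the
equation for `u^[k]` against `φ·L*f` and applying them to `D*(φ·L*f)` gives the equation for
`u^[k+1]`.
-/

lemma Lop_apply (q ω : ℂ) (f : ℂ[X]) : Lop q ω f = f.comp (C q * X + C ω) := by
  simp [Lop, comp_eq_aeval]

lemma Lop_mul (q ω : ℂ) (f g : ℂ[X]) : Lop q ω (f * g) = Lop q ω f * Lop q ω g := by
  simp only [Lop_apply, mul_comp]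

lemma Lop_C_mul (q ω c : ℂ) (f : ℂ[X]) : Lop q ω (C c * f) = C c * Lop q ω f := by
  simp only [Lop_apply, mul_comp, C_comp]

lemma Lop_inv_Lop {q : ℂ} (hq0 : q ≠ 0) (ω : ℂ) (f : ℂ[X]) :
    Lop q⁻¹ (-ω / q) (Lop q ω f) = f := by
  have hX : (C q * X + C ω).comp (C q⁻¹ * X + C (-ω / q)) = X :=
    Polynomial.funext fun x ↦ by
      simp only [eval_comp, eval_add, eval_mul, eval_C, eval_X]; field_simp; ring
  rw [Lop_apply, Lop_apply, comp_assoc, hX, comp_X]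

lemma dual_apply_C_mul (v : PDual) (c : ℂ) (f : ℂ[X]) : v (C c * f) = c * v f := by
  rw [← smul_eq_C_mul, map_smul, smul_eq_mul]

def hahnFactor (q ω : ℂ) : ℂ[X] := C (q - 1) * X + C ω

lemma hahnFactor_ne_zero {q ω : ℂ} (hqω : q ≠ 1 ∨ ω ≠ 0) : hahnFactor q ω ≠ 0 := by
  intro h
  have h0 : ω = 0 := by simpa [hahnFactor] using congrArg (eval 0) h
  have h1 : q - 1 + ω = 0 := by simpa [hahnFactor] using congrArg (eval 1) h
  exact hqω.elim (fun hq ↦ hq (by linear_combination h1 - h0)) (· h0)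

lemma Lop_hahnFactor (q ω : ℂ) : Lop q ω (hahnFactor q ω) = C q * hahnFactor q ω :=
  Polynomial.funext fun x ↦ by
    simp only [hahnFactor, Lop_apply, eval_comp, eval_add, eval_mul, eval_C, eval_X]; ring

lemma Lop_inv_hahnFactor {q : ℂ} (hq0 : q ≠ 0) (ω : ℂ) :
    Lop q⁻¹ (-ω / q) (hahnFactor q ω) = -hahnFactor q⁻¹ (-ω / q) :=
  Polynomial.funext fun x ↦ by
    simp only [hahnFactor, Lop_apply, eval_comp, eval_add, eval_mul, eval_C, eval_X, eval_neg]
    field_simp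
    ring

lemma inv_ne_one_or_neg_div_ne_zero {q ω : ℂ} (hq0 : q ≠ 0) (hqω : q ≠ 1 ∨ ω ≠ 0) :
    q⁻¹ ≠ 1 ∨ -ω / q ≠ 0 := by
  rcases hqω with hq | hω
  · exact Or.inl (inv_ne_one.mpr hq)
  · exact Or.inr (div_ne_zero (neg_ne_zero.mpr hω) hq0)

namespace IsHahn

variable {q ω : ℂ} {D : ℂ[X] →ₗ[ℂ] ℂ[X]}

lemma hahnFactor_mul (hD : IsHahn q ω D) (f : ℂ[X]) :
    hahnFactor q ω * D f = Lop q ω f - f := by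
  rw [Lop_apply]
  exact hD f

lemma map_mul (hD : IsHahn q ω D) (hqω : q ≠ 1 ∨ ω ≠ 0) (f g : ℂ[X]) :
    D (f * g) = D f * g + Lop q ω f * D g := by
  apply mul_left_cancel₀ (hahnFactor_ne_zero hqω)
  calc hahnFactor q ω * D (f * g)
      = (Lop q ω f - f) * g + Lop q ω f * (Lop q ω g - g) := by
        rw [hD.hahnFactor_mul, Lop_mul]; ring
    _ = hahnFactor q ω * (D f * g + Lop q ω f * D g) := by
        rw [← hD.hahnFactor_mul, ← hD.hahnFactor_mul]; ring

lemma map_Lop (hD : IsHahn q ω D) (hqω : q ≠ 1 ∨ ω ≠ 0) (f : ℂ[X]) :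
    D (Lop q ω f) = C q * Lop q ω (D f) := by
  apply mul_left_cancel₀ (hahnFactor_ne_zero hqω)
  calc hahnFactor q ω * D (Lop q ω f)
      = Lop q ω (hahnFactor q ω * D f) := by
        rw [hD.hahnFactor_mul, hD.hahnFactor_mul, map_sub]
    _ = hahnFactor q ω * (C q * Lop q ω (D f)) := by
        rw [Lop_mul, Lop_hahnFactor]; ring

lemma apply_eq_Lop_inv_apply (hD : IsHahn q ω D) {Dstar : ℂ[X] →ₗ[ℂ] ℂ[X]}
    (hDstar : IsHahn q⁻¹ (-ω / q) Dstar) (hq0 : q ≠ 0) (hqω : q ≠ 1 ∨ ω ≠ 0) (f : ℂ[X]) :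
    Dstar f = Lop q⁻¹ (-ω / q) (D f) := by
  apply mul_left_cancel₀ (hahnFactor_ne_zero (inv_ne_one_or_neg_div_ne_zero hq0 hqω))
  calc hahnFactor q⁻¹ (-ω / q) * Dstar f
      = -Lop q⁻¹ (-ω / q) (Lop q ω f - f) := by
        rw [hDstar.hahnFactor_mul, map_sub, Lop_inv_Lop hq0]; ring
    _ = hahnFactor q⁻¹ (-ω / q) * Lop q⁻¹ (-ω / q) (D f) := by
        rw [← hD.hahnFactor_mul, Lop_mul, Lop_inv_hahnFactor hq0]; ring

end IsHahn

theorem hahnDual_pMul_LDual_pMul {q ω : ℂ} (hq0 : q ≠ 0) (hqω : q ≠ 1 ∨ ω ≠ 0)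
    {D Dstar : ℂ[X] →ₗ[ℂ] ℂ[X]} (hD : IsHahn q ω D) (hDstar : IsHahn q⁻¹ (-ω / q) Dstar)
    {φ ψ : ℂ[X]} {v : PDual} (hv : hahnDual q Dstar (pMul φ v) = pMul ψ v) :
    hahnDual q Dstar (pMul φ (LDual q ω (pMul φ v))) =
      pMul (D φ + C q * Lop q ω ψ) (LDual q ω (pMul φ v)) := by
  set L := Lop q⁻¹ (-ω / q)
  have hqω' := inv_ne_one_or_neg_div_ne_zero hq0 hqω
  refine LinearMap.ext fun f ↦ ?_
  have hvf := LinearMap.congr_fun hv (φ * L f)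
  simp only [hahnDual, pMul, LDual, LinearMap.smul_apply, LinearMap.comp_apply,
    LinearMap.mulLeft_apply, smul_eq_mul] at hvf ⊢
  have hlhs : φ * L (φ * Dstar f) = φ * L φ * L (Dstar f) := by
    rw [Lop_mul]; ring
  have hrhs : φ * L ((D φ + C q * Lop q ω ψ) * f) =
      φ * Dstar φ * L f + C q * (ψ * (φ * L f)) := by
    rw [Lop_mul, map_add, Lop_C_mul, Lop_inv_Lop hq0, ← hD.apply_eq_Lop_inv_apply hDstar hq0 hqω]
    ring
  have hleibniz : φ * Dstar (φ * L f) = φ * Dstar φ * L f + C q⁻¹ * (φ * L φ * L (Dstar f)) := by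
    rw [hDstar.map_mul hqω', hDstar.map_Lop hqω']
    ring
  rw [hleibniz, map_add, dual_apply_C_mul] at hvf
  rw [hlhs, hrhs, map_add, dual_apply_C_mul, ← hvf]
  field_simp
  ring

theorem stmt_14_general (q ω : ℂ) (hq0 : q ≠ 0) (hqω : q ≠ 1 ∨ ω ≠ 0)
    (φ ψ : Polynomial ℂ)
    (Dqw : Polynomial ℂ →ₗ[ℂ] Polynomial ℂ) (hDqw : IsHahn q ω Dqw)
    (Dstar : Polynomial ℂ →ₗ[ℂ] Polynomial ℂ) (hDstar : IsHahn q⁻¹ (-ω / q) Dstar)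
    (u : PDual)
    (heq : hahnDual q Dstar (pMul φ u) = pMul ψ u)
    (uSeq : ℕ → PDual) (hu0 : uSeq 0 = u)
    (huk : ∀ k : ℕ, uSeq (k + 1) = LDual q ω (pMul φ (uSeq k)))
    (psik : ℕ → Polynomial ℂ) (hps0 : psik 0 = ψ)
    (hpsk : ∀ k : ℕ, psik (k + 1) = Dqw φ + C q * Lop q ω (psik k)) :
    ∀ k : ℕ, hahnDual q Dstar (pMul φ (uSeq k)) = pMul (psik k) (uSeq k) := by
  intro k
  induction k with
  | zero => rw [hu0, hps0]; exact heq
  | succ k ih =>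
    rw [huk, hpsk]
    exact hahnDual_pMul_LDual_pMul hq0 hqω hDqw hDstar ih

theorem stmt_14 (q ω : ℂ) (hq0 : q ≠ 0) (hqω : q ≠ 1 ∨ ω ≠ 0)
    (hqr : ∀ n : ℕ, 0 < n → q ^ n = 1 → q = 1)
    (φ ψ : Polynomial ℂ) (hφ : φ.natDegree ≤ 2) (hψ : ψ.natDegree ≤ 1)
    (Dqw : Polynomial ℂ →ₗ[ℂ] Polynomial ℂ) (hDqw : IsHahn q ω Dqw)
    (Dstar : Polynomial ℂ →ₗ[ℂ] Polynomial ℂ) (hDstar : IsHahn q⁻¹ (-ω / q) Dstar)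
    (u : PDual)
    (heq : hahnDual q Dstar (pMul φ u) = pMul ψ u)
    (uSeq : ℕ → PDual) (hu0 : uSeq 0 = u)
    (huk : ∀ k : ℕ, uSeq (k + 1) = LDual q ω (pMul φ (uSeq k)))
    (psik : ℕ → Polynomial ℂ) (hps0 : psik 0 = ψ)
    (hpsk : ∀ k : ℕ, psik (k + 1) = Dqw φ + C q * Lop q ω (psik k)) :
    ∀ k : ℕ, hahnDual q Dstar (pMul φ (uSeq k)) = pMul (psik k) (uSeq k) :=
  stmt_14_general q ω hq0 hqω φ ψ Dqw hDqw Dstar hDstar u heq uSeq hu0 huk psik hps0 hpsk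

end HahnOPSPaper
end
end
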